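/- Let K be an O-cocomplete O-category, F : K → K a locally continuous functor, and k : K₀ → F K₀ an embedding. Let κ : Φ ⇒ A be an O-colimit of the ω-chain Φ : K₀ → FK₀ → F²K₀ → ⋯ generated by k (with connecting maps F^n k). Then the morphism fold = ⊔_n κ_{n+1} ∘ F(κ_n^p) : F A → A is an isomorphism, with inverse unfold = ⊔_n F(κ_n) ∘ κ_{n+1}^p : A → F A. In particular A ≅ F A. -/

import Mathlib

open CategoryTheory OmegaCompletePartialOrder

universe v u

class OHom (K : Type u) [Category.{v} K] where
  homOrder : ∀ X Y : K, OmegaCompletePartialOrder (X ⟶ Y)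

attribute [instance] OHom.homOrder

/-- An O-category: a category enriched in dcpos with continuous composition. -/
class OCat (K : Type u) [Category.{v} K] extends OHom K where
  comp_mono : ∀ {X Y Z : K} {f f' : X ⟶ Y} {g g' : Y ⟶ Z},
    f ≤ f' → g ≤ g' → f ≫ g ≤ f' ≫ g'
  comp_cont_left : ∀ {X Y Z : K} (g : Y ⟶ Z) (c : Chain (X ⟶ Y))
    (hm : Monotone fun n => c n ≫ g),
    ωSup c ≫ g = ωSup ⟨fun n => c n ≫ g, hm⟩
  comp_cont_right : ∀ {X Y Z : K} (f : X ⟶ Y) (c : Chain (Y ⟶ Z))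
    (hm : Monotone fun n => f ≫ c n),
    f ≫ ωSup c = ωSup ⟨fun n => f ≫ c n, hm⟩

/-- Iterated application of an endofunctor to an object: `pob F X n = Fⁿ X`. -/
def pob {K : Type u} [Category.{v} K] (F : K ⥤ K) (X : K) : ℕ → K
  | 0 => X
  | n + 1 => F.obj (pob F X n)

/-- The links `Fⁿ k : Fⁿ X ⟶ Fⁿ⁺¹ X` of the ω-chain generated by a first link
`k : X ⟶ F X`. -/
def plink {K : Type u} [Category.{v} K] (F : K ⥤ K) {X : K} (k : X ⟶ F.obj X) :
    ∀ n, pob F X n ⟶ pob F X (n + 1)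
  | 0 => k
  | n + 1 => F.map (plink F k n)

/-! Composition is jointly continuous, so `fold ≫ unfold` is the supremum of the diagonal
composites `F(κₙᵖ) ≫ κₙ₊₁ ≫ κₙ₊₁ᵖ ≫ F(κₙ)`. The identity `κₙ₊₁ ≫ κₙ₊₁ᵖ = 𝟙` cancels in the
middle, leaving `⊔ₙ F(κₙᵖ ≫ κₙ) = F(⊔ₙ κₙᵖ ≫ κₙ) = F(𝟙)` by local continuity. Symmetrically
`unfold ≫ fold = ⊔ₙ κₙ₊₁ᵖ ≫ κₙ₊₁`, a tail of the chain whose supremum is `𝟙 A`. -/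

theorem OmegaCompletePartialOrder.ωSup_shift_succ {α : Type*} [OmegaCompletePartialOrder α]
    (c : Chain α) (hm : Monotone fun n => c (n + 1)) :
    ωSup ⟨fun n => c (n + 1), hm⟩ = ωSup c :=
  le_antisymm (ωSup_le_ωSup_of_le fun n => ⟨n + 1, le_rfl⟩)
    (ωSup_le_ωSup_of_le fun n => ⟨n, c.monotone n.le_succ⟩)

namespace OCat

variable {K : Type u} [Category.{v} K] [OCat K]

theorem ωSup_comp_ωSup {X Y Z : K} (c : Chain (X ⟶ Y)) (d : Chain (Y ⟶ Z))
    (hm : Monotone fun n => c n ≫ d n) :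
    ωSup c ≫ ωSup d = ωSup ⟨fun n => c n ≫ d n, hm⟩ := by
  refine le_antisymm ?_ (ωSup_le _ _ fun n => comp_mono (le_ωSup c n) (le_ωSup d n))
  rw [comp_cont_left _ c fun _ _ h => comp_mono (c.monotone h) le_rfl]
  refine ωSup_le _ _ fun n => ?_
  change c n ≫ ωSup d ≤ _
  rw [comp_cont_right _ d fun _ _ h => comp_mono le_rfl (d.monotone h)]
  refine ωSup_le _ _ fun m => ?_
  calc c n ≫ d m ≤ c (max n m) ≫ d (max n m) :=
        comp_mono (c.monotone (le_max_left n m)) (d.monotone (le_max_right n m))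
    _ ≤ _ := le_ωSup ⟨fun n => c n ≫ d n, hm⟩ (max n m)

theorem ωSup_comp_ωSup_of_retract {X W Z : K} {Y : ℕ → K} {p : ∀ n, X ⟶ Y n}
    {e : ∀ n, Y n ⟶ W} {q : ∀ n, W ⟶ Y n} {r : ∀ n, Y n ⟶ Z} {s : ℕ → (X ⟶ Z)}
    (hsection : ∀ n, e n ≫ q n = 𝟙 (Y n)) (hs : ∀ n, p n ≫ r n = s n)
    (hc : Monotone fun n => p n ≫ e n) (hd : Monotone fun n => q n ≫ r n) (hsm : Monotone s) :
    ωSup ⟨fun n => p n ≫ e n, hc⟩ ≫ ωSup ⟨fun n => q n ≫ r n, hd⟩ = ωSup ⟨s, hsm⟩ := by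
  rw [ωSup_comp_ωSup _ _ fun _ _ h => comp_mono (hc h) (hd h)]
  congr 1
  ext n
  change (p n ≫ e n) ≫ q n ≫ r n = s n
  rw [Category.assoc, reassoc_of% hsection n, hs n]

end OCat

theorem fold_unfold_iso {K : Type u} [Category.{v} K] [OCat K]
    (F : K ⥤ K)
    (hFmono : ∀ {X Y : K} {f g : X ⟶ Y}, f ≤ g → F.map f ≤ F.map g)
    (hFcont : ∀ {X Y : K} (c : Chain (X ⟶ Y))
      (hm : Monotone fun n => F.map (c n)),
      F.map (ωSup c) = ωSup ⟨fun n => F.map (c n), hm⟩)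
    (X : K)
    (A : K) (κ : ∀ n, pob F X n ⟶ A) (κp : ∀ n, A ⟶ pob F X n)
    (hκ₁ : ∀ n, κ n ≫ κp n = 𝟙 (pob F X n))
    (hκmono : Monotone fun n => κp n ≫ κ n)
    (hκsup : ωSup ⟨fun n => κp n ≫ κ n, hκmono⟩ = 𝟙 A) :
    ∀ (hf : Monotone fun n => F.map (κp n) ≫ κ (n + 1))
      (hu : Monotone fun n => κp (n + 1) ≫ F.map (κ n)),
      (ωSup ⟨fun n => F.map (κp n) ≫ κ (n + 1), hf⟩
          ≫ ωSup ⟨fun n => κp (n + 1) ≫ F.map (κ n), hu⟩ = 𝟙 (F.obj A)) ∧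
      (ωSup ⟨fun n => κp (n + 1) ≫ F.map (κ n), hu⟩
          ≫ ωSup ⟨fun n => F.map (κp n) ≫ κ (n + 1), hf⟩ = 𝟙 A) := by
  intro hf hu
  have hFκ : ∀ n, F.map (κ n) ≫ F.map (κp n) = 𝟙 _ := fun n => by
    rw [← F.map_comp, hκ₁, F.map_id]
  constructor
  · calc _ = ωSup ⟨fun n => F.map (κp n ≫ κ n), fun _ _ h => hFmono (hκmono h)⟩ :=
          OCat.ωSup_comp_ωSup_of_retract (fun n => hκ₁ (n + 1)) (fun _ => (F.map_comp _ _).symm)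
            hf hu _
      _ = F.map (ωSup ⟨fun n => κp n ≫ κ n, hκmono⟩) := (hFcont ⟨_, hκmono⟩ _).symm
      _ = 𝟙 (F.obj A) := by rw [hκsup, F.map_id]
  · calc _ = ωSup ⟨fun n => κp (n + 1) ≫ κ (n + 1), fun _ _ h => hκmono (Nat.succ_le_succ h)⟩ :=
          OCat.ωSup_comp_ωSup_of_retract hFκ (fun _ => rfl) hu hf _
      _ = ωSup ⟨fun n => κp n ≫ κ n, hκmono⟩ := ωSup_shift_succ ⟨_, hκmono⟩ _
      _ = 𝟙 A := hκsup
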